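/- arXiv:1204.0758 — 3 statements merged into one kernel-verified Lean document; each statement's English description precedes it below -/
import Mathlib

section
/- Let a < b be real numbers and let f : ℝ → ℝ be continuous on [a,b]. Assume that the upper right Dini derivative f'_+(y) := limsup_{h→0+} (f(y+h) − f(y))/h is finite for every y ∈ [a,b] and that the function y ↦ f'_+(y) is Lebesgue integrable over [a,b]. Then f(b) − f(a) = ∫_{[a,b]} f'_+(y) dy, where the integral is the Lebesgue integral. -/
open MeasureTheory Filter Set

/-- Upper right Dini derivative, as a value in `EReal = [-∞,∞]`. -/
noncomputable def diniE (f : ℝ → ℝ) (x : ℝ) : EReal :=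
  Filter.limsup (fun h : ℝ => (((f (x + h) - f x) / h : ℝ) : EReal))
    (nhdsWithin 0 (Set.Ioi 0))

/-!
Majorize φ by a lower semicontinuous ψ with `∫ ψ ≤ ∫ φ + ε` (Vitali–Carathéodory). Lower
semicontinuity makes `∫ₜᵘ ψ ≥ (u - t) y` for all `u` slightly to the right of `t` whenever
`y < ψ t`, while `φ t < y` makes the slope of `g` at `t` drop below `y` at points `u`
arbitrarily close to the right of `t`. A continuous induction along `[a, b]` therefore gives
`g t - g a ≤ ∫ₐᵗ ψ` on all of `[a, b]`, hence `g b - g a ≤ ∫ φ`. Applied to `f` and to `-f`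
with `φ` the Dini derivative, this yields both inequalities.
-/

open scoped Topology

theorem eventually_mul_le_integral_of_lt_lowerSemicontinuous {ψ : ℝ → EReal} {a b t y : ℝ}
    (hψ : LowerSemicontinuous ψ) (hψint : IntegrableOn (fun w => (ψ w).toReal) (Icc a b))
    (hψtop : ∀ᵐ w ∂volume.restrict (Icc a b), ψ w < ⊤) (ht : t ∈ Ico a b)
    (hy : (y : EReal) < ψ t) :
    ∀ᶠ u in 𝓝[>] t, (u - t) * y ≤ ∫ w in t..u, (ψ w).toReal := by
  obtain ⟨M, htM, hM⟩ :=
    exists_Ico_subset_of_mem_nhds (hψ.lowerSemicontinuousAt t y hy) ⟨b, ht.2⟩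
  filter_upwards [Ioo_mem_nhdsGT (lt_min htM ht.2)] with u hu
  have hsub : Icc t u ⊆ Icc a b := Icc_subset_Icc ht.1 (hu.2.le.trans (min_le_right _ _))
  calc (u - t) * y = ∫ _ in t..u, y := by simp
    _ ≤ ∫ w in t..u, (ψ w).toReal := by
      refine intervalIntegral.integral_mono_ae_restrict hu.1.le intervalIntegrable_const
        ((intervalIntegrable_iff_integrableOn_Icc_of_le hu.1.le).2 (hψint.mono_set hsub)) ?_
      filter_upwards [ae_restrict_mem measurableSet_Icc,
        ae_mono (Measure.restrict_mono hsub le_rfl) hψtop] with w hw hwtop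
      have hyw : (y : EReal) < ψ w :=
        hM ⟨hw.1, hw.2.trans_lt (hu.2.trans_le (min_le_left _ _))⟩
      -- `hwtop` is needed because `EReal.toReal ⊤ = 0`
      simpa using EReal.toReal_le_toReal hyw.le (EReal.coe_ne_bot y) hwtop.ne

theorem sub_le_integral_of_lowerSemicontinuous {g : ℝ → ℝ} {ψ : ℝ → EReal} {a b : ℝ}
    (hab : a ≤ b) (hg : ContinuousOn g (Icc a b)) (hψ : LowerSemicontinuous ψ)
    (hψint : IntegrableOn (fun w => (ψ w).toReal) (Icc a b))
    (hψtop : ∀ᵐ w ∂volume.restrict (Icc a b), ψ w < ⊤)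
    (hslope : ∀ x ∈ Ico a b, ∃ y : ℝ, (y : EReal) < ψ x ∧ ∃ᶠ u in 𝓝[>] x, slope g x u < y) :
    g b - g a ≤ ∫ w in a..b, (ψ w).toReal := by
  have hii : ∀ {t u}, t ∈ Icc a b → u ∈ Icc a b →
      IntervalIntegrable (fun w => (ψ w).toReal) volume t u :=
    fun ht hu => (hψint.mono_set (uIcc_subset_Icc ht hu)).intervalIntegrable
  set s := {t | g t - g a ≤ ∫ w in a..t, (ψ w).toReal}
  have hclosed : IsClosed (s ∩ Icc a b) := by
    have hF : ContinuousOn (fun t => ∫ w in a..t, (ψ w).toReal) (Icc a b) := by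
      rw [← uIcc_of_le hab] at hψint ⊢
      exact intervalIntegral.continuousOn_primitive_interval hψint
    rw [inter_comm]
    exact isClosed_Icc.isClosed_le (hg.sub continuousOn_const) hF
  refine hclosed.Icc_subset_of_forall_exists_gt (by simp [s]) (fun t ⟨hts, ht⟩ v htv => ?_)
    (right_mem_Icc.2 hab)
  obtain ⟨y, hyψ, hfreq⟩ := hslope t ht
  have hnear : ∀ᶠ u in 𝓝[>] t, u ∈ Ioc t (min v b) :=
    Ioc_mem_nhdsGT (lt_min htv ht.2)
  have hψnear := eventually_mul_le_integral_of_lt_lowerSemicontinuous hψ hψint hψtop ht hyψ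
  obtain ⟨u, hgu, hψu, htu⟩ := (hfreq.and_eventually (hψnear.and hnear)).exists
  have huab : u ∈ Icc a b := ⟨ht.1.trans htu.1.le, htu.2.trans (min_le_right _ _)⟩
  refine ⟨u, ?_, htu.1, htu.2.trans (min_le_left _ _)⟩
  have hgtu : g u - g t ≤ (u - t) * y := by
    rw [slope_def_field, div_lt_iff₀ (sub_pos.2 htu.1)] at hgu
    linarith
  calc g u - g a = (g t - g a) + (g u - g t) := by ring
    _ ≤ (∫ w in a..t, (ψ w).toReal) + ∫ w in t..u, (ψ w).toReal :=
      add_le_add hts (hgtu.trans hψu)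
    _ = ∫ w in a..u, (ψ w).toReal :=
      intervalIntegral.integral_add_adjacent_intervals
        (hii (left_mem_Icc.2 hab) (Ico_subset_Icc_self ht)) (hii (Ico_subset_Icc_self ht) huab)

theorem sub_le_integral_of_frequently_slope_lt {g φ : ℝ → ℝ} {a b : ℝ} (hab : a ≤ b)
    (hg : ContinuousOn g (Icc a b)) (hφ : IntegrableOn φ (Icc a b))
    (hslope : ∀ x ∈ Ico a b, ∀ y, φ x < y → ∃ᶠ u in 𝓝[>] x, slope g x u < y) :
    g b - g a ≤ ∫ x in a..b, φ x := by
  refine le_of_forall_pos_le_add fun ε hε => ?_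
  obtain ⟨ψ, hφψ, hψ, hψint, hψtop, hψε⟩ := exists_lt_lowerSemicontinuous_integral_lt φ hφ hε
  have hgψ : g b - g a ≤ ∫ w in a..b, (ψ w).toReal := by
    refine sub_le_integral_of_lowerSemicontinuous hab hg hψ hψint hψtop fun x hx => ?_
    obtain ⟨y, hφy, hyψ⟩ := EReal.lt_iff_exists_real_btwn.1 (hφψ x)
    exact ⟨y, hyψ, hslope x hx y (EReal.coe_lt_coe_iff.1 hφy)⟩
  simp only [intervalIntegral.integral_of_le hab, ← integral_Icc_eq_integral_Ioc] at hgψ ⊢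
  linarith

theorem sub_eq_integral_of_frequently_slope {g φ : ℝ → ℝ} {a b : ℝ} (hab : a ≤ b)
    (hg : ContinuousOn g (Icc a b)) (hφ : IntegrableOn φ (Icc a b))
    (hslope_lt : ∀ x ∈ Ico a b, ∀ y, φ x < y → ∃ᶠ u in 𝓝[>] x, slope g x u < y)
    (hslope_gt : ∀ x ∈ Ico a b, ∀ y, y < φ x → ∃ᶠ u in 𝓝[>] x, y < slope g x u) :
    g b - g a = ∫ x in a..b, φ x := by
  have hle := sub_le_integral_of_frequently_slope_lt hab hg hφ hslope_lt
  have hge := sub_le_integral_of_frequently_slope_lt hab hg.neg hφ.neg fun x hx y hy => by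
    simpa [slope_neg, neg_lt] using hslope_gt x hx (-y) (neg_lt.1 hy)
  simp only [Pi.neg_apply, intervalIntegral.integral_neg] at hge
  linarith

theorem diniE_eq_limsup_slope (f : ℝ → ℝ) (x : ℝ) :
    diniE f x = limsup (fun u => (slope f x u : EReal)) (𝓝[>] x) := by
  have hmap : map (x + ·) (𝓝[>] 0) = 𝓝[>] x := by
    rw [map_add_left_nhdsGT, add_zero]
  rw [diniE, ← hmap, ← limsup_comp]
  congr with h
  simp [slope_def_field]

theorem frequently_slope_lt_of_diniE_lt {f : ℝ → ℝ} {x y : ℝ} (h : diniE f x < y) :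
    ∃ᶠ u in 𝓝[>] x, slope f x u < y := by
  rw [diniE_eq_limsup_slope] at h
  exact (eventually_lt_of_limsup_lt h).frequently.mono fun _ => EReal.coe_lt_coe_iff.1

theorem frequently_lt_slope_of_lt_diniE {f : ℝ → ℝ} {x y : ℝ} (h : y < diniE f x) :
    ∃ᶠ u in 𝓝[>] x, y < slope f x u := by
  rw [diniE_eq_limsup_slope] at h
  exact (frequently_lt_of_lt_limsup (by isBoundedDefault) h).mono
    fun _ => EReal.coe_lt_coe_iff.1

/-- Fundamental theorem of calculus for upper right Dini derivatives
(Theorem 11 in Hagood–Thomson). -/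
theorem stmt_0 (a b : ℝ) (hab : a < b) (f : ℝ → ℝ)
    (hcont : ContinuousOn f (Set.Icc a b))
    (hfin : ∀ y ∈ Set.Icc a b, diniE f y ≠ ⊥ ∧ diniE f y ≠ ⊤)
    (hint : MeasureTheory.IntegrableOn (fun y => (diniE f y).toReal) (Set.Icc a b)) :
    f b - f a = ∫ y in Set.Icc a b, (diniE f y).toReal := by
  have hcoe : ∀ x ∈ Ico a b, ((diniE f x).toReal : EReal) = diniE f x := fun x hx =>
    EReal.coe_toReal (hfin x (Ico_subset_Icc_self hx)).2 (hfin x (Ico_subset_Icc_self hx)).1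
  rw [integral_Icc_eq_integral_Ioc, ← intervalIntegral.integral_of_le hab.le]
  exact sub_eq_integral_of_frequently_slope hab.le hcont hint
    (fun x hx y hy => frequently_slope_lt_of_diniE_lt (by rw [← hcoe x hx]; exact_mod_cast hy))
    (fun x hx y hy => frequently_lt_slope_of_lt_diniE (by rw [← hcoe x hx]; exact_mod_cast hy))
end

section
/- Let ν be a measure on 𝒮 with ∫_𝒮 (1 − s_1) ν(ds) < ∞, let f ∈ 𝒯 and let 0 < a < b. Then ∫_𝒮 sup_{x∈[a,b]} |f(x + ln s_1) − f(x)| ν(ds) < ∞, where f(x + ln s_1) is interpreted as 1 when s_1 = 0. -/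
open MeasureTheory Filter Set

/-- The class 𝒯: nonincreasing `f : ℝ → [0,1]`, equal to `1` on `(-∞,0)`,
continuous on `(0,∞)`, tending to `0` at `+∞`, with upper right Dini derivative
finite and bounded on every compact subinterval of `(0,∞)`. -/
def MemT (f : ℝ → ℝ) : Prop :=
  Antitone f ∧ (∀ x, f x ∈ Set.Icc (0 : ℝ) 1) ∧ (∀ x < (0 : ℝ), f x = 1) ∧
    ContinuousOn f (Set.Ioi 0) ∧ Filter.Tendsto f Filter.atTop (nhds 0) ∧
    ∀ s t : ℝ, 0 < s → s < t →
      ∃ C : ℝ, ∀ x ∈ Set.Icc s t, -(C : EReal) ≤ diniE f x ∧ diniE f x ≤ (C : EReal)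
/-- The simplex 𝒮 of nonincreasing nonnegative sequences with total sum at most 1
(indexed from `0`, so `s 0` plays the role of `s₁`). -/
def fragSimplex : Set (ℕ → ℝ) :=
  {s | (∀ n, s (n + 1) ≤ s n) ∧ (∀ n, 0 ≤ s n) ∧ Summable s ∧ (∑' n, s n) ≤ 1}

/-! For `s₁` close to `1`, say `s₁ ≥ δ := e^{-a/2}`, the shifted point `x + ln s₁` stays in
`[a/2, b]` for `x ∈ [a, b]`. There a lower bound `-C` on the Dini derivative makes `f` Lipschitz
from below (by the fencing form of the mean value theorem), and since `f` is nonincreasing this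
bounds the jump by `C · (-ln s₁) ≤ C (1 - s₁) / δ`. For `s₁ < δ` the jump is at most
`1 ≤ (1 - s₁) / (1 - δ)`. So the integrand is at most `K (1 - s₁)`, whose integral is finite. -/

open Topology

theorem frequently_slope_neg_lt_of_neg_le_diniE {f : ℝ → ℝ} {x C r : ℝ}
    (hd : -(C : EReal) ≤ diniE f x) (hr : C < r) :
    ∃ᶠ z in 𝓝[>] x, slope (fun z => -f z) x z < r := by
  have hlt : ((-r : ℝ) : EReal) < diniE f x :=
    lt_of_lt_of_le (by exact_mod_cast neg_lt_neg hr) hd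
  have hquot : ∃ᶠ h in 𝓝[>] (0 : ℝ), -r < (f (x + h) - f x) / h := by
    exact (frequently_lt_of_lt_limsup (by isBoundedDefault) hlt).mono fun h hh => by
      exact_mod_cast hh
  have hshift : Tendsto (x + ·) (𝓝[>] (0 : ℝ)) (𝓝[>] x) := by
    refine tendsto_nhdsWithin_of_tendsto_nhds_of_eventually_within _ ?_ ?_
    · simpa using (continuous_const_add x).tendsto 0 |>.mono_left nhdsWithin_le_nhds
    · filter_upwards [self_mem_nhdsWithin] with h (hh : 0 < h)
      simpa using hh
  refine hshift.frequently (hquot.mono fun h hh => ?_)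
  rw [slope_def_field, add_sub_cancel_left]
  have : (-f (x + h) - -f x) / h = -((f (x + h) - f x) / h) := by ring
  linarith

theorem sub_le_mul_sub_of_neg_le_diniE {f : ℝ → ℝ} {s t C : ℝ}
    (hf : ContinuousOn f (Icc s t)) (hd : ∀ x ∈ Icc s t, -(C : EReal) ≤ diniE f x)
    {x y : ℝ} (hx : x ∈ Icc s t) (hy : y ∈ Icc s t) (hxy : x ≤ y) :
    f x - f y ≤ C * (y - x) := by
  have hsub : Icc x y ⊆ Icc s t := Icc_subset_Icc hx.1 hy.2
  have fence : ∀ z ∈ Icc x y, -f z ≤ -f x + C * (z - x) :=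
    image_le_of_liminf_slope_right_le_deriv_boundary (B' := fun _ => C) (hf.mono hsub).neg
      (by simp) (by fun_prop)
      (fun u _ => ((((hasDerivWithinAt_id u (Ici u)).sub_const x).const_mul C).const_add
        (-f x)).congr_deriv (by ring))
      (fun u hu _ hr =>
        frequently_slope_neg_lt_of_neg_le_diniE (hd u (hsub (Ico_subset_Icc_self hu))) hr)
  linarith [fence y (right_mem_Icc.2 hxy)]

theorem Real.neg_log_le_div_of_le {δ σ : ℝ} (hδ : 0 < δ) (hδσ : δ ≤ σ) (hσ : σ ≤ 1) :
    -Real.log σ ≤ (1 - σ) / δ := by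
  have hσ0 : 0 < σ := hδ.trans_le hδσ
  calc -Real.log σ ≤ σ⁻¹ - 1 := by linarith [Real.one_sub_inv_le_log_of_pos hσ0]
    _ = (1 - σ) / σ := by field_simp
    _ ≤ (1 - σ) / δ := div_le_div_of_nonneg_left (by linarith) hδ hδσ

theorem fragSimplex.head_mem_Icc {s : ℕ → ℝ} (hs : s ∈ fragSimplex) : s 0 ∈ Icc 0 1 :=
  ⟨hs.2.1 0, (hs.2.2.1.le_tsum 0 fun n _ => hs.2.1 n).trans hs.2.2.2⟩

namespace MemT

variable {f : ℝ → ℝ}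

theorem exists_sub_le_mul_sub (hf : MemT f) {s t : ℝ} (hs : 0 < s) (hst : s < t) :
    ∃ C, 0 ≤ C ∧ ∀ x ∈ Icc s t, ∀ y ∈ Icc s t, x ≤ y → f x - f y ≤ C * (y - x) := by
  obtain ⟨C, hC⟩ := hf.2.2.2.2.2 s t hs hst
  have hcont : ContinuousOn f (Icc s t) := hf.2.2.2.1.mono fun z hz => hs.trans_le hz.1
  refine ⟨max C 0, le_max_right _ _, fun x hx y hy hxy => ?_⟩
  calc f x - f y ≤ C * (y - x) :=
        sub_le_mul_sub_of_neg_le_diniE hcont (fun z hz => (hC z hz).1) hx hy hxy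
    _ ≤ max C 0 * (y - x) := mul_le_mul_of_nonneg_right (le_max_left _ _) (sub_nonneg.2 hxy)

theorem abs_ite_sub_le_one (hf : MemT f) (σ x y : ℝ) :
    |(if σ = 0 then (1 : ℝ) else f y) - f x| ≤ 1 := by
  have hx := hf.2.1 x
  have hy := hf.2.1 y
  rw [abs_le]
  split_ifs <;> constructor <;> linarith [hx.1, hx.2, hy.1, hy.2]

theorem exists_abs_shift_le (hf : MemT f) {a b : ℝ} (ha : 0 < a) (hab : a < b) :
    ∃ K, 0 ≤ K ∧ ∀ σ ∈ Icc (0 : ℝ) 1, ∀ x ∈ Icc a b,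
      |(if σ = 0 then (1 : ℝ) else f (x + Real.log σ)) - f x| ≤ K * (1 - σ) := by
  obtain ⟨C, hC0, hC⟩ := hf.exists_sub_le_mul_sub (t := b) (half_pos ha) (by linarith)
  set δ := Real.exp (-(a / 2))
  have hδ0 : 0 < δ := Real.exp_pos _
  have hδ1 : δ < 1 := Real.exp_lt_one_iff.2 (by linarith)
  refine ⟨max (C / δ) (1 / (1 - δ)), by positivity, fun σ hσ x hx => ?_⟩
  have h1σ : 0 ≤ 1 - σ := sub_nonneg.2 hσ.2
  rcases le_or_gt δ σ with hδσ | hσδ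
  · have hlog : -(a / 2) ≤ Real.log σ := by
      simpa only [δ, Real.log_exp] using Real.log_le_log hδ0 hδσ
    have hlog0 : Real.log σ ≤ 0 := Real.log_nonpos hσ.1 hσ.2
    have hjump : 0 ≤ f (x + Real.log σ) - f x := sub_nonneg.2 (hf.1 (by linarith))
    rw [if_neg (hδ0.trans_le hδσ).ne', abs_of_nonneg hjump]
    calc f (x + Real.log σ) - f x ≤ C * (x - (x + Real.log σ)) :=
          hC _ ⟨by linarith [hx.1], by linarith [hx.2]⟩ _ ⟨by linarith [hx.1], hx.2⟩
            (by linarith)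
      _ = C * -Real.log σ := by ring
      _ ≤ C * ((1 - σ) / δ) :=
          mul_le_mul_of_nonneg_left (Real.neg_log_le_div_of_le hδ0 hδσ hσ.2) hC0
      _ = C / δ * (1 - σ) := by ring
      _ ≤ _ := mul_le_mul_of_nonneg_right (le_max_left _ _) h1σ
  · calc _ ≤ (1 : ℝ) := hf.abs_ite_sub_le_one σ x _
      _ ≤ 1 / (1 - δ) * (1 - σ) := by
          rw [div_mul_eq_mul_div, one_mul, le_div_iff₀ (by linarith)]
          linarith
      _ ≤ _ := mul_le_mul_of_nonneg_right (le_max_right _ _) h1σ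

end MemT

/-- Finiteness of `∫_𝒮 sup_{x ∈ [a,b]} |f(x + ln s₁) - f(x)| ν(ds)` for `f ∈ 𝒯`,
with `f(x + ln s₁)` interpreted as `1` when `s₁ = 0`. -/
theorem stmt_6 (ν : MeasureTheory.Measure fragSimplex)
    (hν : ∫⁻ s, ENNReal.ofReal (1 - (s : ℕ → ℝ) 0) ∂ν < ⊤)
    (f : ℝ → ℝ) (hf : MemT f) (a b : ℝ) (ha : 0 < a) (hab : a < b) :
    ∫⁻ s, ENNReal.ofReal (sSup ((fun x =>
        |(if (s : ℕ → ℝ) 0 = 0 then (1 : ℝ) else f (x + Real.log ((s : ℕ → ℝ) 0))) - f x|)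
          '' Set.Icc a b)) ∂ν < ⊤ := by
  obtain ⟨K, hK, hshift⟩ := hf.exists_abs_shift_le ha hab
  have hsup (s : fragSimplex) : sSup ((fun x =>
        |(if (s : ℕ → ℝ) 0 = 0 then (1 : ℝ) else f (x + Real.log ((s : ℕ → ℝ) 0))) - f x|)
          '' Set.Icc a b) ≤ K * (1 - (s : ℕ → ℝ) 0) := by
    have hs := fragSimplex.head_mem_Icc s.2
    refine Real.sSup_le ?_ (mul_nonneg hK (sub_nonneg.2 hs.2))
    rintro _ ⟨x, hx, rfl⟩
    exact hshift _ hs x hx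
  calc _ ≤ ∫⁻ s, ENNReal.ofReal K * ENNReal.ofReal (1 - (s : ℕ → ℝ) 0) ∂ν :=
        lintegral_mono fun s => by
          rw [← ENNReal.ofReal_mul hK]
          exact ENNReal.ofReal_le_ofReal (hsup s)
    _ = ENNReal.ofReal K * ∫⁻ s, ENNReal.ofReal (1 - (s : ℕ → ℝ) 0) ∂ν :=
        lintegral_const_mul' _ _ ENNReal.ofReal_ne_top
    _ < ⊤ := ENNReal.mul_lt_top ENNReal.ofReal_lt_top hν
end

section
/- Let ν be a measure on 𝒮 with ∫_𝒮 (1 − s_1) ν(ds) < ∞, let f ∈ 𝒯 and let 0 < a < b. Then ∫_𝒮 sup_{x∈[a,b]} |P_f(x, s) − f(x)| ν(ds) < ∞. -/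
/-
The factor with the largest fragment controls everything. Since `s₁ ≤ 1`, `P_f(x,s) ≤ f(x + ln s₁)`,
and the bounded lower Dini derivative of `f` on `[a/2, b]` makes `f` Lipschitz there, so
`f(x + ln s₁) - f(x) ≲ -ln s₁ ≲ 1 - s₁` (for `s₁` near `0` the difference is at most `1`).
Conversely `f(x + ln s₁) ≥ f(x)`, and every other factor satisfies `1 - f(x + ln sₙ) ≤ eˣ sₙ`
(it vanishes unless `x + ln sₙ ≥ 0`), so by `∏ gₙ ≥ 1 - ∑ (1 - gₙ)` the remaining factors cost
at most `e^b ∑_{n≥2} sₙ ≤ e^b (1 - s₁)`. Hence `sup_{x∈[a,b]} |P_f(x,s) - f(x)| ≤ D (1 - s₁)`,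
which is `ν`-integrable by assumption.
-/


open MeasureTheory Filter Set

/-- The infinite product `P_f(x,s) = ∏_{n : s n > 0} f (x + ln (s n))`, realised as the
limit (= infimum, by antitonicity of partial products of `[0,1]`-valued factors) of the
partial products; factors with `s n = 0` are interpreted as `1`. -/
noncomputable def prodP (f : ℝ → ℝ) (x : ℝ) (s : ℕ → ℝ) : ℝ :=
  ⨅ N : ℕ, ∏ n ∈ Finset.range N, (if s n = 0 then (1 : ℝ) else f (x + Real.log (s n)))

open Topology Real

theorem diniE_le_of_eventually_slope_le {f : ℝ → ℝ} {z r : ℝ}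
    (h : ∀ᶠ w in 𝓝[>] z, slope f z w ≤ r) : diniE f z ≤ r := by
  have hmap : map (z + ·) (𝓝[>] (0 : ℝ)) = 𝓝[>] z := by simp
  rw [← hmap, eventually_map] at h
  refine limsup_le_of_le (by isBoundedDefault) ?_
  filter_upwards [h] with w hw
  rw [slope_def_field, add_sub_cancel_left] at hw
  exact_mod_cast hw

theorem sub_le_mul_of_neg_le_diniE {f : ℝ → ℝ} {x y C : ℝ} (hxy : x ≤ y)
    (hf : ContinuousOn f (Icc x y)) (hd : ∀ z ∈ Ico x y, -(C : EReal) ≤ diniE f z) :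
    f x - f y ≤ C * (y - x) := by
  have key := image_le_of_liminf_slope_right_le_deriv_boundary (f := fun z => -f z)
    (B := fun z => -f x + C * (z - x)) (B' := fun _ => C) hf.neg (by simp) (by fun_prop)
    (fun z _ => (((hasDerivWithinAt_id z (Ici z)).sub_const x).const_mul C).const_add (-f x)
      |>.congr_deriv (mul_one C))
    (fun z hz r hr => by
      by_contra hcon
      have hle : diniE f z ≤ ((-r : ℝ) : EReal) := diniE_le_of_eventually_slope_le <| by
        filter_upwards [not_frequently.1 hcon] with w hw
        rw [slope_neg] at hw
        linarith
      have : -(C : EReal) ≤ ((-r : ℝ) : EReal) := (hd z hz).trans hle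
      rw [← EReal.coe_neg, EReal.coe_le_coe_iff] at this
      linarith)
  linarith [key ⟨hxy, le_rfl⟩]

theorem one_sub_sum_le_prod {ι : Type*} (s : Finset ι) {g : ι → ℝ} (h0 : ∀ i ∈ s, 0 ≤ g i)
    (h1 : ∀ i ∈ s, g i ≤ 1) : 1 - ∑ i ∈ s, (1 - g i) ≤ ∏ i ∈ s, g i := by
  classical
  induction s using Finset.cons_induction with
  | empty => simp
  | cons j s hj ih =>
    simp only [Finset.mem_cons, forall_eq_or_imp] at h0 h1
    rw [Finset.sum_cons, Finset.prod_cons]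
    have hsum : 0 ≤ ∑ i ∈ s, (1 - g i) := Finset.sum_nonneg fun i hi => by linarith [h1.2 i hi]
    nlinarith [mul_le_mul_of_nonneg_left (ih h0.2 h1.2) h0.1]

theorem ciInf_prod_range_le_zero {g : ℕ → ℝ} (h0 : ∀ n, 0 ≤ g n) :
    ⨅ N, ∏ n ∈ Finset.range N, g n ≤ g 0 := by
  have hbdd : BddBelow (range fun N => ∏ n ∈ Finset.range N, g n) :=
    ⟨0, by rintro _ ⟨N, rfl⟩; exact Finset.prod_nonneg fun n _ => h0 n⟩
  simpa using ciInf_le hbdd 1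

theorem sub_le_ciInf_prod_range {g : ℕ → ℝ} {c : ℝ} (h0 : ∀ n, 0 ≤ g n) (h1 : ∀ n, g n ≤ 1)
    (hc : ∀ N, ∑ i ∈ Finset.range N, (1 - g (i + 1)) ≤ c) :
    g 0 - c ≤ ⨅ N, ∏ n ∈ Finset.range N, g n := by
  have hc0 : 0 ≤ c := by simpa using hc 0
  refine le_ciInf fun N => ?_
  rcases N with _ | N
  · simp only [Finset.range_zero, Finset.prod_empty]
    linarith [h1 0]
  · have htail := (one_sub_sum_le_prod (Finset.range N) (fun i _ => h0 (i + 1))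
      fun i _ => h1 (i + 1)).trans' (sub_le_sub_left (hc N) 1)
    rw [Finset.prod_range_succ']
    nlinarith [mul_le_mul_of_nonneg_right htail (h0 0), h1 0]

section fragSimplex

variable {s : ℕ → ℝ} (hs : s ∈ fragSimplex)
include hs

theorem nonneg_of_mem_fragSimplex (n : ℕ) : 0 ≤ s n := hs.2.1 n

theorem sum_range_succ_le_one_sub_of_mem_fragSimplex (N : ℕ) :
    ∑ i ∈ Finset.range N, s (i + 1) ≤ 1 - s 0 := by
  have := (hs.2.2.1.sum_le_tsum (Finset.range (N + 1)) fun i _ => hs.2.1 i).trans hs.2.2.2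
  rw [Finset.sum_range_succ'] at this
  linarith

theorem apply_zero_le_one_of_mem_fragSimplex : s 0 ≤ 1 := by
  simpa using sum_range_succ_le_one_sub_of_mem_fragSimplex hs 0

end fragSimplex

noncomputable def prodFactor (f : ℝ → ℝ) (x : ℝ) (s : ℕ → ℝ) (n : ℕ) : ℝ :=
  if s n = 0 then 1 else f (x + Real.log (s n))

theorem prodP_eq_iInf_prod_prodFactor (f : ℝ → ℝ) (x : ℝ) (s : ℕ → ℝ) :
    prodP f x s = ⨅ N, ∏ n ∈ Finset.range N, prodFactor f x s n := rfl

namespace MemT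

variable {f : ℝ → ℝ} (hf : MemT f)
include hf

theorem nonneg (x : ℝ) : 0 ≤ f x := (hf.2.1 x).1

theorem le_one (x : ℝ) : f x ≤ 1 := (hf.2.1 x).2

theorem prodFactor_nonneg (x : ℝ) (s : ℕ → ℝ) (n : ℕ) : 0 ≤ prodFactor f x s n := by
  unfold prodFactor; split_ifs
  exacts [zero_le_one, hf.nonneg _]

theorem prodFactor_le_one (x : ℝ) (s : ℕ → ℝ) (n : ℕ) : prodFactor f x s n ≤ 1 := by
  unfold prodFactor; split_ifs
  exacts [le_rfl, hf.le_one _]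

theorem le_prodFactor_zero (x : ℝ) {s : ℕ → ℝ} (h0 : 0 ≤ s 0) (h1 : s 0 ≤ 1) :
    f x ≤ prodFactor f x s 0 := by
  unfold prodFactor; split_ifs
  exacts [hf.le_one x, hf.1 (by linarith [log_nonpos h0 h1])]

theorem one_sub_prodFactor_le (x : ℝ) {s : ℕ → ℝ} {n : ℕ} (hn : 0 ≤ s n) :
    1 - prodFactor f x s n ≤ exp x * s n := by
  unfold prodFactor
  split_ifs with h
  · simp [h]
  by_cases hneg : x + log (s n) < 0
  · obtain ⟨-, -, hone, -⟩ := hf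
    rw [hone _ hneg, sub_self]
    positivity
  · have : 1 ≤ exp x * s n := by
      rw [← exp_log (hn.lt_of_ne' h), ← exp_add]
      exact one_le_exp (not_lt.1 hneg)
    linarith [hf.nonneg (x + log (s n))]

theorem exists_sub_le_mul {s t : ℝ} (hs : 0 < s) (hst : s < t) :
    ∃ C, 0 ≤ C ∧ ∀ x ∈ Icc s t, ∀ y ∈ Icc s t, x ≤ y → f x - f y ≤ C * (y - x) := by
  obtain ⟨-, -, -, hcont, -, hdini⟩ := hf
  obtain ⟨C, hC⟩ := hdini s t hs hst
  refine ⟨max C 0, le_max_right _ _, fun x hx y hy hxy => ?_⟩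
  refine sub_le_mul_of_neg_le_diniE hxy
    (hcont.mono fun z hz => hs.trans_le (hx.1.trans hz.1)) fun z hz => ?_
  refine le_trans ?_ (hC z ⟨hx.1.trans hz.1, hz.2.le.trans hy.2⟩).1
  exact_mod_cast neg_le_neg (le_max_left C 0)

theorem exists_comp_add_log_sub_le {a b : ℝ} (ha : 0 < a) (hab : a < b) :
    ∃ K, 1 ≤ K ∧ ∀ x ∈ Icc a b, ∀ t ∈ Ioc (0 : ℝ) 1, f (x + log t) - f x ≤ K * (1 - t) := by
  obtain ⟨C, hC0, hC⟩ := hf.exists_sub_le_mul (half_pos ha) (by linarith : a / 2 < b)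
  -- for `t ≥ δ` the point `x + log t` stays in `[a/2, b]`, where `f` is Lipschitz
  set δ := exp (-(a / 2))
  have hδ : δ < 1 := exp_lt_one_iff.2 (by linarith)
  have hK : 1 ≤ (1 - δ)⁻¹ := one_le_inv₀ (by linarith) |>.2 (by linarith [exp_pos (-(a / 2))])
  have hK1 : 1 ≤ max (C * exp (a / 2)) (1 - δ)⁻¹ := hK.trans (le_max_right _ _)
  refine ⟨_, hK1, fun x hx t ht => ?_⟩
  have h1t : 0 ≤ 1 - t := by linarith [ht.2]
  by_cases htδ : δ ≤ t
  · have hlog : -(a / 2) ≤ log t := (le_log_iff_exp_le ht.1).2 htδ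
    have hlip := hC (x + log t) ⟨by linarith [hx.1], by linarith [hx.2, log_nonpos ht.1.le ht.2]⟩
      x ⟨by linarith [hx.1], hx.2⟩ (by linarith [log_nonpos ht.1.le ht.2])
    have hinv : t⁻¹ ≤ exp (a / 2) := by
      rw [inv_le_comm₀ ht.1 (exp_pos _), ← exp_neg]
      exact htδ
    have hneglog : -log t ≤ exp (a / 2) * (1 - t) := calc
      -log t = log t⁻¹ := (log_inv t).symm
      _ ≤ t⁻¹ - 1 := log_le_sub_one_of_pos (inv_pos.2 ht.1)
      _ = t⁻¹ * (1 - t) := by rw [mul_sub, mul_one, inv_mul_cancel₀ ht.1.ne']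
      _ ≤ exp (a / 2) * (1 - t) := mul_le_mul_of_nonneg_right hinv h1t
    calc f (x + log t) - f x ≤ C * (-log t) := by linarith
      _ ≤ C * exp (a / 2) * (1 - t) := by
        rw [mul_assoc]; exact mul_le_mul_of_nonneg_left hneglog hC0
      _ ≤ _ := mul_le_mul_of_nonneg_right (le_max_left _ _) h1t
  · calc f (x + log t) - f x ≤ 1 := by linarith [hf.le_one (x + log t), hf.nonneg x]
      _ = (1 - δ)⁻¹ * (1 - δ) := (inv_mul_cancel₀ (by linarith)).symm
      _ ≤ _ := mul_le_mul (le_max_right _ _) (by linarith) (by linarith) (by linarith)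

theorem sub_exp_mul_le_prodP {s : ℕ → ℝ} (hs : s ∈ fragSimplex) (x : ℝ) :
    f x - exp x * (1 - s 0) ≤ prodP f x s := calc
  f x - exp x * (1 - s 0) ≤ prodFactor f x s 0 - exp x * (1 - s 0) := by
    gcongr
    exact hf.le_prodFactor_zero x (nonneg_of_mem_fragSimplex hs 0) (apply_zero_le_one_of_mem_fragSimplex hs)
  _ ≤ prodP f x s := by
    rw [prodP_eq_iInf_prod_prodFactor]
    refine sub_le_ciInf_prod_range (hf.prodFactor_nonneg x s) (hf.prodFactor_le_one x s) fun N => ?_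
    calc ∑ i ∈ Finset.range N, (1 - prodFactor f x s (i + 1))
        ≤ ∑ i ∈ Finset.range N, exp x * s (i + 1) :=
          Finset.sum_le_sum fun i _ => hf.one_sub_prodFactor_le x (nonneg_of_mem_fragSimplex hs _)
      _ ≤ exp x * (1 - s 0) := by
        rw [← Finset.mul_sum]
        exact mul_le_mul_of_nonneg_left (sum_range_succ_le_one_sub_of_mem_fragSimplex hs N) (exp_pos x).le

theorem exists_prodP_sub_le {a b : ℝ} (ha : 0 < a) (hab : a < b) :
    ∃ K, 1 ≤ K ∧ ∀ s ∈ fragSimplex, ∀ x ∈ Icc a b, prodP f x s - f x ≤ K * (1 - s 0) := by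
  obtain ⟨K, hK1, hK⟩ := hf.exists_comp_add_log_sub_le ha hab
  refine ⟨K, hK1, fun s hs x hx => ?_⟩
  have hP : prodP f x s ≤ prodFactor f x s 0 :=
    (prodP_eq_iInf_prod_prodFactor f x s).trans_le
      (ciInf_prod_range_le_zero (hf.prodFactor_nonneg x s))
  unfold prodFactor at hP
  split_ifs at hP with h0
  · rw [h0, sub_zero, mul_one]
    linarith [hf.nonneg x]
  · linarith [hK x hx (s 0) ⟨(nonneg_of_mem_fragSimplex hs 0).lt_of_ne' h0, apply_zero_le_one_of_mem_fragSimplex hs⟩]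

theorem exists_abs_prodP_sub_le {a b : ℝ} (ha : 0 < a) (hab : a < b) :
    ∃ D, 0 ≤ D ∧ ∀ s ∈ fragSimplex, ∀ x ∈ Icc a b, |prodP f x s - f x| ≤ D * (1 - s 0) := by
  obtain ⟨K, hK1, hK⟩ := hf.exists_prodP_sub_le ha hab
  refine ⟨K + exp b, by positivity, fun s hs x hx => ?_⟩
  have h1s : 0 ≤ 1 - s 0 := sub_nonneg.2 (apply_zero_le_one_of_mem_fragSimplex hs)
  refine abs_sub_le_iff.2 ⟨?_, ?_⟩
  · nlinarith [hK s hs x hx, exp_pos b]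
  · nlinarith [hf.sub_exp_mul_le_prodP hs x, exp_le_exp.2 hx.2]

end MemT

/-- Finiteness of `∫_𝒮 sup_{x ∈ [a,b]} |P_f(x,s) - f(x)| ν(ds)` for `f ∈ 𝒯`. -/
theorem stmt_8 (ν : MeasureTheory.Measure fragSimplex)
    (hν : ∫⁻ s, ENNReal.ofReal (1 - (s : ℕ → ℝ) 0) ∂ν < ⊤)
    (f : ℝ → ℝ) (hf : MemT f) (a b : ℝ) (ha : 0 < a) (hab : a < b) :
    ∫⁻ s, ENNReal.ofReal
        (sSup ((fun x => |prodP f x (s : ℕ → ℝ) - f x|) '' Set.Icc a b)) ∂ν < ⊤ := by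
  obtain ⟨D, hD0, hD⟩ := hf.exists_abs_prodP_sub_le ha hab
  have hsup (s : fragSimplex) :
      sSup ((fun x => |prodP f x (s : ℕ → ℝ) - f x|) '' Set.Icc a b) ≤ D * (1 - (s : ℕ → ℝ) 0) :=
    Real.sSup_le (by rintro _ ⟨x, hx, rfl⟩; exact hD s s.2 x hx)
      (mul_nonneg hD0 (sub_nonneg.2 (apply_zero_le_one_of_mem_fragSimplex s.2)))
  calc _ ≤ ∫⁻ s, ENNReal.ofReal D * ENNReal.ofReal (1 - (s : ℕ → ℝ) 0) ∂ν :=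
        lintegral_mono fun s => (ENNReal.ofReal_le_ofReal (hsup s)).trans_eq (ENNReal.ofReal_mul hD0)
    _ = ENNReal.ofReal D * ∫⁻ s, ENNReal.ofReal (1 - (s : ℕ → ℝ) 0) ∂ν :=
        lintegral_const_mul' _ _ ENNReal.ofReal_ne_top
    _ < ⊤ := ENNReal.mul_lt_top ENNReal.ofReal_lt_top hν
end
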